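/- arXiv:2505.02145 — 2 statements merged into one kernel-verified Lean document; each statement's English description precedes it below -/
import Mathlib

section
/- Let M, N : ℝ × (0,∞) → ℝ be smooth functions, not both constant, and let λ ∈ ℝ. Suppose that for all (x,y) with y > 0: ∂M/∂x(x,y) − N(x,y)/y = λ + 1, ∂M/∂y(x,y) + ∂N/∂x(x,y) = 0, and ∂N/∂y(x,y) − N(x,y)/y = λ + 1. Then λ = −1 (so the vector field X = M∂x + N∂y is Killing), and there exist real constants a, b, c such that for all (x,y) with y > 0: M(x,y) = (a/2)(x² − y²) + bx + c and N(x,y) = axy + by. -/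
open Set Topology

/-- Partial derivative with respect to the first variable. -/
noncomputable def pdx (f : ℝ → ℝ → ℝ) (x y : ℝ) : ℝ := deriv (fun t => f t y) x

/-- Partial derivative with respect to the second variable. -/
noncomputable def pdy (f : ℝ → ℝ → ℝ) (x y : ℝ) : ℝ := deriv (fun t => f x t) y

lemma Uopen : IsOpen {p : ℝ × ℝ | 0 < p.2} := isOpen_lt continuous_const continuous_snd

section gen
variable {E : Type*} [NormedAddCommGroup E] [NormedSpace ℝ E]

lemma hx_helper {F : ℝ × ℝ → E} (hF : ContDiffOn ℝ (⊤ : ℕ∞) F {p : ℝ × ℝ | 0 < p.2})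
    {x y : ℝ} (hy : 0 < y) :
    HasDerivAt (fun t => F (t, y)) (fderiv ℝ F (x, y) (1, 0)) x := by
  have hp : (x, y) ∈ {p : ℝ × ℝ | 0 < p.2} := hy
  have hd : DifferentiableAt ℝ F (x, y) :=
    (hF.contDiffAt (Uopen.mem_nhds hp)).differentiableAt (by simp)
  have hc : HasDerivAt (fun t : ℝ => (t, y)) ((1 : ℝ), (0 : ℝ)) x := by
    simpa using ((hasDerivAt_id x).prodMk (hasDerivAt_const x y))
  exact hd.hasFDerivAt.comp_hasDerivAt x hc

lemma hy_helper {F : ℝ × ℝ → E} (hF : ContDiffOn ℝ (⊤ : ℕ∞) F {p : ℝ × ℝ | 0 < p.2})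
    {x y : ℝ} (hy : 0 < y) :
    HasDerivAt (fun t => F (x, t)) (fderiv ℝ F (x, y) (0, 1)) y := by
  have hp : (x, y) ∈ {p : ℝ × ℝ | 0 < p.2} := hy
  have hd : DifferentiableAt ℝ F (x, y) :=
    (hF.contDiffAt (Uopen.mem_nhds hp)).differentiableAt (by simp)
  have hc : HasDerivAt (fun t : ℝ => (x, t)) ((0 : ℝ), (1 : ℝ)) y := by
    simpa using ((hasDerivAt_const y x).prodMk (hasDerivAt_id y))
  exact hd.hasFDerivAt.comp_hasDerivAt y hc
end gen

lemma fderiv_smooth {F : ℝ × ℝ → ℝ} (hF : ContDiffOn ℝ (⊤ : ℕ∞) F {p : ℝ × ℝ | 0 < p.2}) :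
    ContDiffOn ℝ (⊤ : ℕ∞) (fderiv ℝ F) {p : ℝ × ℝ | 0 < p.2} :=
  hF.fderiv_of_isOpen Uopen (by simp)

lemma hxv {F : ℝ × ℝ → ℝ} (hF : ContDiffOn ℝ (⊤ : ℕ∞) F {p : ℝ × ℝ | 0 < p.2})
    {x y : ℝ} (hy : 0 < y) (v : ℝ × ℝ) :
    HasDerivAt (fun t => fderiv ℝ F (t, y) v)
      (fderiv ℝ (fderiv ℝ F) (x, y) (1, 0) v) x := by
  simpa using (hx_helper (fderiv_smooth hF) hy (x := x)).clm_apply (hasDerivAt_const x v)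

lemma hyv {F : ℝ × ℝ → ℝ} (hF : ContDiffOn ℝ (⊤ : ℕ∞) F {p : ℝ × ℝ | 0 < p.2})
    {x y : ℝ} (hy : 0 < y) (v : ℝ × ℝ) :
    HasDerivAt (fun t => fderiv ℝ F (x, t) v)
      (fderiv ℝ (fderiv ℝ F) (x, y) (0, 1) v) y := by
  simpa using (hy_helper (fderiv_smooth hF) hy (y := y)).clm_apply (hasDerivAt_const y v)

lemma clairaut {F : ℝ × ℝ → ℝ} (hF : ContDiffOn ℝ (⊤ : ℕ∞) F {p : ℝ × ℝ | 0 < p.2})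
    {x y : ℝ} (hy : 0 < y) (v w : ℝ × ℝ) :
    fderiv ℝ (fderiv ℝ F) (x, y) v w = fderiv ℝ (fderiv ℝ F) (x, y) w v := by
  have hev : ∀ᶠ q in 𝓝 (x, y), HasFDerivAt F (fderiv ℝ F q) q := by
    filter_upwards [Uopen.mem_nhds (show (x, y) ∈ {p : ℝ × ℝ | 0 < p.2} from hy)] with q hq
    exact ((hF.contDiffAt (Uopen.mem_nhds hq)).differentiableAt (by simp)).hasFDerivAt
  have h2 : HasFDerivAt (fderiv ℝ F) (fderiv ℝ (fderiv ℝ F) (x, y)) (x, y) :=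
    (((fderiv_smooth hF).contDiffAt
      (Uopen.mem_nhds (show (x, y) ∈ {p : ℝ × ℝ | 0 < p.2} from hy))).differentiableAt
        (by simp)).hasFDerivAt
  exact second_derivative_symmetric_of_eventually hev h2 v w

section K
variable {f : ℝ → ℝ → ℝ}

lemma K1 (hf : ContDiffOn ℝ (⊤ : ℕ∞) (fun p : ℝ × ℝ => f p.1 p.2) {p : ℝ × ℝ | 0 < p.2})
    {x y : ℝ} (hy : 0 < y) : HasDerivAt (fun t => f t y) (pdx f x y) x :=
  (hx_helper hf hy (x := x)).differentiableAt.hasDerivAt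

lemma K2 (hf : ContDiffOn ℝ (⊤ : ℕ∞) (fun p : ℝ × ℝ => f p.1 p.2) {p : ℝ × ℝ | 0 < p.2})
    {x y : ℝ} (hy : 0 < y) : HasDerivAt (fun t => f x t) (pdy f x y) y :=
  (hy_helper hf hy (y := y)).differentiableAt.hasDerivAt

lemma pdx_eq (hf : ContDiffOn ℝ (⊤ : ℕ∞) (fun p : ℝ × ℝ => f p.1 p.2) {p : ℝ × ℝ | 0 < p.2})
    {x y : ℝ} (hy : 0 < y) :
    pdx f x y = fderiv ℝ (fun p : ℝ × ℝ => f p.1 p.2) (x, y) (1, 0) :=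
  (hx_helper hf hy (x := x)).deriv

lemma pdy_eq (hf : ContDiffOn ℝ (⊤ : ℕ∞) (fun p : ℝ × ℝ => f p.1 p.2) {p : ℝ × ℝ | 0 < p.2})
    {x y : ℝ} (hy : 0 < y) :
    pdy f x y = fderiv ℝ (fun p : ℝ × ℝ => f p.1 p.2) (x, y) (0, 1) :=
  (hy_helper hf hy (y := y)).deriv

lemma K3 (hf : ContDiffOn ℝ (⊤ : ℕ∞) (fun p : ℝ × ℝ => f p.1 p.2) {p : ℝ × ℝ | 0 < p.2})
    {x y : ℝ} (hy : 0 < y) :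
    HasDerivAt (fun t => pdx f t y)
      (fderiv ℝ (fderiv ℝ (fun p : ℝ × ℝ => f p.1 p.2)) (x, y) (1, 0) (1, 0)) x := by
  have he : (fun t => pdx f t y)
      = fun t => fderiv ℝ (fun p : ℝ × ℝ => f p.1 p.2) (t, y) (1, 0) :=
    funext fun t => pdx_eq hf hy
  rw [he]; exact hxv hf hy (1, 0)

lemma K4 (hf : ContDiffOn ℝ (⊤ : ℕ∞) (fun p : ℝ × ℝ => f p.1 p.2) {p : ℝ × ℝ | 0 < p.2})
    {x y : ℝ} (hy : 0 < y) :
    HasDerivAt (fun t => pdx f x t)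
      (fderiv ℝ (fderiv ℝ (fun p : ℝ × ℝ => f p.1 p.2)) (x, y) (0, 1) (1, 0)) y := by
  apply (hyv hf hy (1, 0)).congr_of_eventuallyEq
  filter_upwards [Ioi_mem_nhds hy] with t ht using pdx_eq hf ht

lemma K5 (hf : ContDiffOn ℝ (⊤ : ℕ∞) (fun p : ℝ × ℝ => f p.1 p.2) {p : ℝ × ℝ | 0 < p.2})
    {x y : ℝ} (hy : 0 < y) :
    HasDerivAt (fun t => pdy f t y)
      (fderiv ℝ (fderiv ℝ (fun p : ℝ × ℝ => f p.1 p.2)) (x, y) (1, 0) (0, 1)) x := by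
  have he : (fun t => pdy f t y)
      = fun t => fderiv ℝ (fun p : ℝ × ℝ => f p.1 p.2) (t, y) (0, 1) :=
    funext fun t => pdy_eq hf hy
  rw [he]; exact hxv hf hy (0, 1)
end K

lemma const_on_Ioi {f : ℝ → ℝ} (h : ∀ t ∈ Set.Ioi (0 : ℝ), HasDerivAt f 0 t)
    {y : ℝ} (hy : 0 < y) : f y = f 1 := by
  apply (convex_Ioi (0 : ℝ)).is_const_of_fderivWithin_eq_zero (𝕜 := ℝ)
    (fun t ht => (h t ht).differentiableAt.differentiableWithinAt) ?_ hy
    (by norm_num : (1 : ℝ) ∈ Ioi 0)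
  intro t ht
  rw [fderivWithin_of_isOpen isOpen_Ioi ht]
  have := (h t ht).hasFDerivAt.fderiv
  rw [this]; ext u; simp
/-- Corollary 3.6: a non-constant vector field making `(ℍ², ds², X, λ)` a Ricci
soliton forces `λ = -1` (so `X` is Killing), and `X` has the stated form. -/
theorem stmt_3 (M N : ℝ → ℝ → ℝ) (lam : ℝ)
    (hM : ContDiffOn ℝ (⊤ : ℕ∞) (fun p : ℝ × ℝ => M p.1 p.2) {p : ℝ × ℝ | 0 < p.2})
    (hN : ContDiffOn ℝ (⊤ : ℕ∞) (fun p : ℝ × ℝ => N p.1 p.2) {p : ℝ × ℝ | 0 < p.2})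
    (hnc : ¬ ∃ cM cN : ℝ, ∀ x y : ℝ, 0 < y → M x y = cM ∧ N x y = cN)
    (h1 : ∀ x y : ℝ, 0 < y → pdx M x y - N x y / y = lam + 1)
    (h2 : ∀ x y : ℝ, 0 < y → pdy M x y + pdx N x y = 0)
    (h3 : ∀ x y : ℝ, 0 < y → pdy N x y - N x y / y = lam + 1) :
    lam = -1 ∧
    ∃ a b c : ℝ, ∀ x y : ℝ, 0 < y →
      M x y = a / 2 * (x ^ 2 - y ^ 2) + b * x + c ∧ N x y = a * x * y + b * y := by
  set μ := lam + 1 with hμdef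
  set FM := fun p : ℝ × ℝ => M p.1 p.2 with hFM
  set FN := fun p : ℝ × ℝ => N p.1 p.2 with hFN
  have h1' : ∀ x y : ℝ, 0 < y → pdx M x y = N x y / y + μ := by
    intro x y hy; have := h1 x y hy; linarith
  have h2' : ∀ x y : ℝ, 0 < y → pdy M x y = -pdx N x y := by
    intro x y hy; have := h2 x y hy; linarith
  have h3' : ∀ x y : ℝ, 0 < y → pdy N x y = N x y / y + μ := by
    intro x y hy; have := h3 x y hy; linarith
  -- derivative of y ↦ N x y / y
  have A1 : ∀ x y : ℝ, 0 < y → HasDerivAt (fun t => N x t / t) (μ / y) y := by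
    intro x y hy
    have h := (K2 hN hy (x := x)).div (hasDerivAt_id y) (ne_of_gt hy)
    have hv : (pdy N x y * y - N x y * 1) / y ^ 2 = μ / y := by
      rw [h3' x y hy]; field_simp; ring
    simp only [id_eq] at h
    rwa [hv] at h
  -- mixed partial of M (y then x)
  have A2 : ∀ x y : ℝ, 0 < y → fderiv ℝ (fderiv ℝ FM) (x, y) (0, 1) (1, 0) = μ / y := by
    intro x y hy
    have hK4 := K4 hM hy (x := x)
    have hA : HasDerivAt (fun t => pdx M x t) (μ / y) y := by
      apply ((A1 x y hy).add_const μ).congr_of_eventuallyEq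
      filter_upwards [Ioi_mem_nhds hy] with t ht using h1' x t ht
    exact hK4.unique hA
  -- second x-derivative of N
  have A4 : ∀ x y : ℝ, 0 < y →
      fderiv ℝ (fderiv ℝ FN) (x, y) (1, 0) (1, 0) = -(μ / y) := by
    intro x y hy
    have hK5 := K5 hM hy (x := x)
    have hA : HasDerivAt (fun t => pdy M t y)
        (-(fderiv ℝ (fderiv ℝ FN) (x, y) (1, 0) (1, 0))) x := by
      apply (K3 hN hy (x := x)).neg.congr_of_eventuallyEq
      exact Filter.Eventually.of_forall fun t => h2' t y hy
    have e1 := hK5.unique hA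
    have e2 := clairaut hM (x := x) hy (0, 1) (1, 0)
    have e3 := A2 x y hy
    rw [e2, e1] at e3
    linarith
  -- integrate in x : pdx N is affine in x
  have A5 : ∀ x y : ℝ, 0 < y → pdx N x y = pdx N 0 y - μ * x / y := by
    intro x y hy
    have hg : ∀ t : ℝ, HasDerivAt (fun s => pdx N s y + μ * s / y) 0 t := by
      intro t
      have h := (K3 hN hy (x := t)).add (((hasDerivAt_id t).const_mul μ).div_const y)
      rw [show fderiv ℝ (fderiv ℝ FN) (t, y) (1, 0) (1, 0) + μ * 1 / y = 0 by
        rw [A4 t y hy]; field_simp; ring] at h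
      exact h
    have := is_const_of_deriv_eq_zero (𝕜 := ℝ)
      (fun t => (hg t).differentiableAt) (fun t => (hg t).deriv) x 0
    simp only [mul_zero, zero_div, add_zero] at this
    linarith
  -- mixed partial of N via h3
  have A7 : ∀ x y : ℝ, 0 < y →
      fderiv ℝ (fderiv ℝ FN) (x, y) (0, 1) (1, 0) = pdx N x y / y := by
    intro x y hy
    have hK5 := K5 hN hy (x := x)
    have hA : HasDerivAt (fun t => pdy N t y) (pdx N x y / y) x := by
      apply (((K1 hN hy (x := x)).div_const y).add_const μ).congr_of_eventuallyEq
      exact Filter.Eventually.of_forall fun t => h3' t y hy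
    have e1 := hK5.unique hA
    rw [clairaut hN (x := x) hy (0, 1) (1, 0), e1]
  -- mixed partial of N via A5
  have A6 : ∀ x y : ℝ, 0 < y →
      fderiv ℝ (fderiv ℝ FN) (x, y) (0, 1) (1, 0) = pdx N 0 y / y + μ * x / y ^ 2 := by
    intro x y hy
    have hK4 := K4 hN hy (x := x)
    have hA : HasDerivAt (fun t => pdx N 0 t) (pdx N 0 y / y) y := by
      have h0 := K4 hN hy (x := 0)
      rwa [A7 0 y hy] at h0
    have hdiv : HasDerivAt (fun t => μ * x / t) (-(μ * x) / y ^ 2) y := by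
      have := (hasDerivAt_const y (μ * x)).div (hasDerivAt_id' y) (ne_of_gt hy)
      simpa using (show HasDerivAt (fun t => μ * x / t) _ y from this)
    have hB : HasDerivAt (fun t => pdx N 0 t - μ * x / t)
        (pdx N 0 y / y + μ * x / y ^ 2) y := by
      have := hA.sub hdiv
      rw [show pdx N 0 y / y - -(μ * x) / y ^ 2 = pdx N 0 y / y + μ * x / y ^ 2 by ring] at this
      exact this
    have hC : HasDerivAt (fun t => pdx N x t) (pdx N 0 y / y + μ * x / y ^ 2) y := by
      apply hB.congr_of_eventuallyEq
      filter_upwards [Ioi_mem_nhds hy] with t ht using A5 x t ht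
    exact hK4.unique hC
  -- conclude μ = 0
  have hμ0 : μ = 0 := by
    have e1 := A7 1 1 one_pos
    have e2 := A6 1 1 one_pos
    have e3 := A5 1 1 one_pos
    rw [e1] at e2
    norm_num at e2 e3
    linarith
  have hlam : lam = -1 := by
    have : lam + 1 = 0 := hμ0
    linarith
  refine ⟨hlam, pdx N 0 1, N 0 1, M 0 1 + pdx N 0 1 / 2, ?_⟩
  set a := pdx N 0 1
  set b := N 0 1
  set c := M 0 1 + a / 2 with hc
  -- N x y = N x 1 * y
  have hNy : ∀ x y : ℝ, 0 < y → N x y = N x 1 * y := by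
    intro x y hy
    have hconst : ∀ t ∈ Set.Ioi (0 : ℝ), HasDerivAt (fun s => N x s / s) 0 t := by
      intro t ht
      have := A1 x t ht
      rwa [hμ0, zero_div] at this
    have := const_on_Ioi hconst hy
    field_simp at this
    linarith [this]
  have hpdxN0 : ∀ x y : ℝ, 0 < y → pdx N x y = pdx N 0 y := by
    intro x y hy
    have := A5 x y hy
    rw [hμ0] at this
    simpa using this
  -- N x 1 = a * x + b
  have hNx1 : ∀ x : ℝ, N x 1 = a * x + b := by
    intro x
    have hg : ∀ t : ℝ, HasDerivAt (fun s => N s 1 - a * s) 0 t := by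
      intro t
      have h := (K1 hN one_pos (x := t)).sub ((hasDerivAt_id t).const_mul a)
      rw [show pdx N t 1 - a * 1 = 0 by rw [hpdxN0 t 1 one_pos]; simp [a]] at h
      exact h
    have := is_const_of_deriv_eq_zero (𝕜 := ℝ)
      (fun t => (hg t).differentiableAt) (fun t => (hg t).deriv) x 0
    simp only [mul_zero, sub_zero] at this
    linarith
  have hNform : ∀ x y : ℝ, 0 < y → N x y = a * x * y + b * y := by
    intro x y hy
    rw [hNy x y hy, hNx1 x]; ring
  -- pdx N x y = a * y
  have hpdxNval : ∀ x y : ℝ, 0 < y → pdx N x y = a * y := by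
    intro x y hy
    have h := K1 hN hy (x := x)
    have h2 : HasDerivAt (fun t => N t y) (a * y) x := by
      have hq : HasDerivAt (fun t : ℝ => a * t * y + b * y) (a * y) x := by
        have := (((hasDerivAt_id x).const_mul a).mul_const y).add_const (b * y)
        simpa using this
      apply hq.congr_of_eventuallyEq
      exact Filter.Eventually.of_forall fun t => hNform t y hy
    exact h.unique h2
  -- M x y = M 0 y + a x^2/2 + b x
  have hMx : ∀ x y : ℝ, 0 < y → M x y = M 0 y + a * x ^ 2 / 2 + b * x := by
    intro x y hy
    have hg : ∀ t : ℝ, HasDerivAt (fun s => M s y - (a * s ^ 2 / 2 + b * s)) 0 t := by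
      intro t
      have hq : HasDerivAt (fun s : ℝ => a * s ^ 2 / 2 + b * s) (a * t + b) t := by
        have h1 : HasDerivAt (fun s : ℝ => s ^ 2) (2 * t) t := by
          simpa using hasDerivAt_pow 2 t
        have := ((h1.const_mul a).div_const 2).add ((hasDerivAt_id t).const_mul b)
        rw [show a * (2 * t) / 2 + b * 1 = a * t + b by ring] at this
        exact this
      have hm := K1 hM hy (x := t)
      have hval : pdx M t y = a * t + b := by
        rw [h1' t y hy, hμ0, hNform t y hy]
        field_simp
        ring
      have := hm.sub hq
      rw [hval, sub_self] at this
      exact this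
    have := is_const_of_deriv_eq_zero (𝕜 := ℝ)
      (fun t => (hg t).differentiableAt) (fun t => (hg t).deriv) x 0
    beta_reduce at this
    nlinarith [this]
  -- M 0 y = c - a y^2/2
  have hM0 : ∀ y : ℝ, 0 < y → M 0 y = c - a * y ^ 2 / 2 := by
    intro y hy
    have hg : ∀ t ∈ Set.Ioi (0 : ℝ), HasDerivAt (fun s => M 0 s + a * s ^ 2 / 2) 0 t := by
      intro t ht
      have hm := K2 hM ht (x := 0)
      have hq : HasDerivAt (fun s : ℝ => a * s ^ 2 / 2) (a * t) t := by
        have h1 : HasDerivAt (fun s : ℝ => s ^ 2) (2 * t) t := by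
          simpa using hasDerivAt_pow 2 t
        have := (h1.const_mul a).div_const 2
        rw [show a * (2 * t) / 2 = a * t by ring] at this
        exact this
      have hval : pdy M 0 t = -(a * t) := by
        rw [h2' 0 t ht, hpdxNval 0 t ht]
      have := hm.add hq
      rw [hval, neg_add_cancel] at this
      exact this
    have := const_on_Ioi hg hy
    rw [hc]
    nlinarith [this]
  intro x y hy
  constructor
  · rw [hMx x y hy, hM0 y hy]; ring
  · exact hNform x y hy
end

section
/- Let n ≥ 2 be an integer, let F be a smooth real-valued function on the upper half-space {x ∈ ℝⁿ : xₙ > 0}, let λ, ρ ∈ ℝ, and set μ = λ + (n−1)(1−nρ). Suppose that on the upper half-space: for every i < n, ∂ᵢ∂ᵢF − (1/xₙ)∂ₙF = μ/xₙ²; for all i ≠ j with i, j < n, ∂ᵢ∂ⱼF = 0; for every i < n, ∂ᵢ∂ₙF + (1/xₙ)∂ᵢF = 0; and ∂ₙ∂ₙF + (1/xₙ)∂ₙF = μ/xₙ². Then F is constant on the upper half-space and λ = (1−n)(1−nρ). In particular, hyperbolic n-space admits no gradient Ricci–Bourguignon soliton structure with non-constant potential vector field. -/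
open Set

/-- Partial derivative in the `i`-th coordinate direction. -/
noncomputable def pd {m : ℕ} (i : Fin m) (f : (Fin m → ℝ) → ℝ) (x : Fin m → ℝ) : ℝ :=
  deriv (fun t => f (Function.update x i t)) (x i)

private lemma pd_update {m : ℕ} (f : (Fin m → ℝ) → ℝ) (i : Fin m) (y : Fin m → ℝ) (s : ℝ) :
    pd i f (Function.update y i s) = deriv (fun t => f (Function.update y i t)) s := by
  simp only [pd, Function.update_idem, Function.update_self]

private lemma pd_eq_fderiv {m : ℕ} {f : (Fin m → ℝ) → ℝ} {i : Fin m} {x : Fin m → ℝ}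
    (hf : DifferentiableAt ℝ f x) :
    pd i f x = fderiv ℝ f x (Pi.single i 1) := by
  have hcurve : HasDerivAt (Function.update x i) (Pi.single i (1 : ℝ)) (x i) :=
    hasDerivAt_update x i (x i)
  have hx : Function.update x i (x i) = x := Function.update_eq_self i x
  exact (hf.hasFDerivAt.comp_hasDerivAt_of_eq (x i) hcurve hx.symm).deriv

private lemma const_of_hasDerivAt_zero {f : ℝ → ℝ} {s : Set ℝ} (hso : IsOpen s)
    (hsc : Convex ℝ s) (h : ∀ x ∈ s, HasDerivAt f 0 x) {a b : ℝ} (ha : a ∈ s) (hb : b ∈ s) :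
    f a = f b := by
  have hfd : ∀ x ∈ s, HasFDerivAt f (0 : ℝ →L[ℝ] ℝ) x := by
    intro x hx
    have h0 : ContinuousLinearMap.toSpanSingleton ℝ (0 : ℝ) = 0 := by
      ext; simp
    have := (h x hx).hasFDerivAt
    rwa [h0] at this
  exact hsc.is_const_of_fderivWithin_eq_zero
    (fun x hx => (hfd x hx).differentiableAt.differentiableWithinAt)
    (fun x hx => by rw [fderivWithin_of_isOpen hso hx, (hfd x hx).fderiv]) ha hb

set_option maxHeartbeats 1000000 in
/-- Corollary 3.13: hyperbolic `n`-space admits no gradient Ricci–Bourguignon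
soliton with non-constant potential: any solution `F` of the gradient system (with
`μ = λ + (n-1)(1-nρ)`) is constant and `λ = (1-n)(1-nρ)`. -/
theorem stmt_12 (n : ℕ) (hn : 2 ≤ n) (F : (Fin n → ℝ) → ℝ) (lam rho mu : ℝ)
    (hmu : mu = lam + ((n : ℝ) - 1) * (1 - (n : ℝ) * rho))
    (hF : ContDiffOn ℝ (⊤ : ℕ∞) F {x : Fin n → ℝ | 0 < x ⟨n - 1, by omega⟩})
    (h1 : ∀ i : Fin n, (i : ℕ) < n - 1 → ∀ x : Fin n → ℝ, 0 < x ⟨n - 1, by omega⟩ →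
      pd i (pd i F) x - (1 / x ⟨n - 1, by omega⟩) * pd ⟨n - 1, by omega⟩ F x
        = mu / (x ⟨n - 1, by omega⟩) ^ 2)
    (h2 : ∀ i j : Fin n, (i : ℕ) < n - 1 → (j : ℕ) < n - 1 → i ≠ j →
      ∀ x : Fin n → ℝ, 0 < x ⟨n - 1, by omega⟩ → pd i (pd j F) x = 0)
    (h3 : ∀ i : Fin n, (i : ℕ) < n - 1 → ∀ x : Fin n → ℝ, 0 < x ⟨n - 1, by omega⟩ →
      pd i (pd ⟨n - 1, by omega⟩ F) x + (1 / x ⟨n - 1, by omega⟩) * pd i F x = 0)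
    (h4 : ∀ x : Fin n → ℝ, 0 < x ⟨n - 1, by omega⟩ →
      pd ⟨n - 1, by omega⟩ (pd ⟨n - 1, by omega⟩ F) x
          + (1 / x ⟨n - 1, by omega⟩) * pd ⟨n - 1, by omega⟩ F x
        = mu / (x ⟨n - 1, by omega⟩) ^ 2) :
    (∃ c : ℝ, ∀ x : Fin n → ℝ, 0 < x ⟨n - 1, by omega⟩ → F x = c) ∧
    lam = (1 - (n : ℝ)) * (1 - (n : ℝ) * rho) := by
  classical
  set N : Fin n := ⟨n - 1, by omega⟩ with hNdef
  set D : Set (Fin n → ℝ) := {x : Fin n → ℝ | 0 < x N} with hDdef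
  have hD : IsOpen D := isOpen_lt continuous_const (continuous_apply N)
  have hDc : Convex ℝ D :=
    convex_halfSpace_gt ⟨fun a b => rfl, fun c a => rfl⟩ 0
  have hFD : ContDiffOn ℝ (⊤ : ℕ∞) F D := hF
  -- restated hypotheses
  have H1 : ∀ i : Fin n, (i : ℕ) < n - 1 → ∀ y ∈ D,
      pd i (pd i F) y - (1 / y N) * pd N F y = mu / (y N) ^ 2 := fun i hi y hy => h1 i hi y hy
  have H3 : ∀ i : Fin n, (i : ℕ) < n - 1 → ∀ y ∈ D,
      pd i (pd N F) y + (1 / y N) * pd i F y = 0 := fun i hi y hy => h3 i hi y hy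
  have H4 : ∀ y ∈ D, pd N (pd N F) y + (1 / y N) * pd N F y = mu / (y N) ^ 2 :=
    fun y hy => h4 y hy
  -- basic differentiability
  have hFd : ∀ y ∈ D, DifferentiableAt ℝ F y := fun y hy =>
    (hFD.differentiableOn (by simp)).differentiableAt (hD.mem_nhds hy)
  have hPN : ContDiffOn ℝ 1 (fun y => fderiv ℝ F y (Pi.single N 1)) D := by
    exact (ContinuousLinearMap.apply ℝ ℝ (Pi.single N (1 : ℝ))).contDiff.comp_contDiffOn
      (hFD.fderiv_of_isOpen hD (m := 1) (WithTop.coe_le_coe.mpr le_top))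
  have hpdN : ∀ y ∈ D, pd N F y = fderiv ℝ F y (Pi.single N 1) := fun y hy =>
    pd_eq_fderiv (hFd y hy)
  -- key function G
  set G : (Fin n → ℝ) → ℝ := fun y => y N * pd N F y - mu * Real.log (y N) with hGdef
  -- Step 1 : G is constant along lines in the N-direction
  have step1 : ∀ y ∈ D, ∀ s : ℝ, 0 < s → G (Function.update y N s) = G y := by
    intro y hy s hs
    set ψ : ℝ → ℝ := fun t => F (Function.update y N t) with hψdef
    have hψ : ContDiffOn ℝ (⊤ : ℕ∞) ψ (Ioi 0) := by
      refine hFD.comp ((contDiff_update ((⊤ : ℕ∞) : WithTop ℕ∞) y N).contDiffOn) ?_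
      intro t ht
      simpa [hDdef] using ht
    have hdψ : DifferentiableOn ℝ (deriv ψ) (Ioi 0) :=
      (hψ.deriv_of_isOpen isOpen_Ioi ((WithTop.coe_le_coe.mpr le_top)) : ContDiffOn ℝ 1 (deriv ψ) (Ioi 0)).differentiableOn
        one_ne_zero
    have hpd1 : ∀ t : ℝ, pd N F (Function.update y N t) = deriv ψ t := fun t =>
      pd_update F N y t
    have hpd2 : ∀ t : ℝ, pd N (pd N F) (Function.update y N t) = deriv (deriv ψ) t := by
      intro t
      rw [pd_update]
      congr 1
      funext v
      exact hpd1 v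
    have hmemD : ∀ t : ℝ, 0 < t → Function.update y N t ∈ D := by
      intro t ht
      simpa [hDdef] using ht
    -- θ is constant
    set θ : ℝ → ℝ := fun t => t * deriv ψ t - mu * Real.log t with hθdef
    have hθ0 : ∀ t ∈ Ioi (0 : ℝ), HasDerivAt θ 0 t := by
      intro t ht
      have ht0 : (0 : ℝ) < t := ht
      have hd2 : HasDerivAt (deriv ψ) (deriv (deriv ψ) t) t :=
        (hdψ.differentiableAt (isOpen_Ioi.mem_nhds ht)).hasDerivAt
      have hmul : HasDerivAt (fun t => t * deriv ψ t)
          (1 * deriv ψ t + t * deriv (deriv ψ) t) t := (hasDerivAt_id t).mul hd2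
      have hlog : HasDerivAt (fun t => mu * Real.log t) (mu * t⁻¹) t :=
        (Real.hasDerivAt_log (ne_of_gt ht0)).const_mul mu
      have heq := H4 (Function.update y N t) (hmemD t ht0)
      rw [Function.update_self, hpd1 t, hpd2 t] at heq
      have hval : deriv ψ t + t * deriv (deriv ψ) t - mu * t⁻¹ = 0 := by
        field_simp at heq ⊢
        nlinarith [heq]
      have h' := hmul.sub hlog
      rw [one_mul, hval] at h'
      exact h'
    have hconst : θ s = θ (y N) :=
      const_of_hasDerivAt_zero isOpen_Ioi (convex_Ioi 0) hθ0 hs hy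
    have hGs : G (Function.update y N s) = θ s := by
      simp [hGdef, hθdef, Function.update_self, hpd1 s]
    have hGy : G y = θ (y N) := by
      simp [hGdef, hθdef, pd, hψdef]
    rw [hGs, hGy, hconst]
  -- special index i0
  have hn1 : 0 < n - 1 := by omega
  set i0 : Fin n := ⟨0, by omega⟩ with hi0def
  have hi0 : (i0 : ℕ) < n - 1 := hn1
  have hNi0 : N ≠ i0 := by
    simp only [hNdef, hi0def, Ne, Fin.mk.injEq]
    omega
  -- Step 2 : mu = 0 and G ≡ 0
  have step2 : ∀ x ∈ D, mu = 0 ∧ G x = 0 := by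
    intro x hx
    have hxN : (0 : ℝ) < x N := hx
    set Γ : ℝ → ℝ := fun u => G (Function.update x i0 u) with hΓdef
    set c : ℝ := deriv (deriv Γ) (x i0) with hcdef
    set g : ℝ := Γ (x i0) with hgdef
    have claimB : ∀ s : ℝ, 0 < s → c * s ^ 2 = -g - mu * Real.log s - mu := by
      intro s hs
      set z : Fin n → ℝ := Function.update x N s with hzdef
      have hzN : ∀ v : ℝ, (Function.update z i0 v) N = s := by
        intro v
        rw [Function.update_of_ne hNi0, hzdef, Function.update_self]
      have hmem : ∀ v : ℝ, Function.update z i0 v ∈ D := by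
        intro v
        show (0:ℝ) < (Function.update z i0 v) N
        rw [hzN]; exact hs
      set β : ℝ → ℝ := fun v => pd N F (Function.update z i0 v) with hβdef
      set α : ℝ → ℝ := fun v => F (Function.update z i0 v) with hαdef
      have hβdiff : ∀ v : ℝ, DifferentiableAt ℝ β v := by
        intro v
        have hfun : β = fun v => fderiv ℝ F (Function.update z i0 v) (Pi.single N 1) := by
          funext v
          exact hpdN _ (hmem v)
        rw [hfun]
        exact ((hPN.differentiableOn one_ne_zero).differentiableAt
          (hD.mem_nhds (hmem v))).comp v (hasDerivAt_update z i0 v).differentiableAt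
      -- Γ in terms of β
      have hΓeq : ∀ u : ℝ, Γ u = s * β u - mu * Real.log s := by
        intro u
        have hxmem : Function.update x i0 u ∈ D := by
          show (0:ℝ) < (Function.update x i0 u) N
          rwa [Function.update_of_ne hNi0]
        have hA : Γ u = G (Function.update z i0 u) := by
          show G (Function.update x i0 u) = G (Function.update z i0 u)
          rw [hzdef, Function.update_comm hNi0]
          exact (step1 _ hxmem s hs).symm
        rw [hA]
        show (Function.update z i0 u) N * pd N F (Function.update z i0 u)
            - mu * Real.log ((Function.update z i0 u) N) = s * β u - mu * Real.log s
        rw [hzN u]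
      -- translate the hypotheses
      have hH3 : ∀ u : ℝ, deriv β u + (1 / s) * deriv α u = 0 := by
        intro u
        have := H3 i0 hi0 (Function.update z i0 u) (hmem u)
        rwa [hzN u, pd_update, pd_update] at this
      have hH1 : ∀ u : ℝ, deriv (deriv α) u - (1 / s) * β u = mu / s ^ 2 := by
        intro u
        have := H1 i0 hi0 (Function.update z i0 u) (hmem u)
        rw [hzN u, pd_update] at this
        have hfun : (fun v => pd i0 F (Function.update z i0 v)) = deriv α := by
          funext v
          exact pd_update F i0 z v
        rwa [hfun] at this
      -- first derivative of Γ
      have hΓ' : deriv Γ = fun u => -deriv α u := by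
        funext u
        have hΓfun : Γ = fun u => s * β u - mu * Real.log s := funext hΓeq
        have hder : HasDerivAt (fun u => s * β u - mu * Real.log s) (s * deriv β u) u :=
          ((hβdiff u).hasDerivAt.const_mul s).sub_const _
        have h3u := hH3 u
        have hs0 : s ≠ 0 := ne_of_gt hs
        rw [hΓfun, hder.deriv]
        field_simp at h3u
        -- h3u : deriv β u * s + deriv α u = 0  (or similar)
        nlinarith [h3u]
      -- second derivative of Γ
      have hΓ'' : c = -(deriv (deriv α) (x i0)) := by
        rw [hcdef, hΓ']
        exact deriv.neg
      have hβx : s * β (x i0) = g + mu * Real.log s := by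
        have := hΓeq (x i0)
        rw [← hgdef] at this
        linarith
      have h1x := hH1 (x i0)
      have hs0 : s ≠ 0 := ne_of_gt hs
      rw [hΓ'']
      field_simp at h1x ⊢
      nlinarith [h1x, hβx]
    -- evaluate at s = 1, e, e^2
    have hE : (1 : ℝ) < Real.exp 1 := by
      have h := Real.exp_lt_exp.mpr (show (0:ℝ) < 1 by norm_num)
      rwa [Real.exp_zero] at h
    have hE0 : (0 : ℝ) < Real.exp 1 := Real.exp_pos 1
    have hE20 : (0 : ℝ) < Real.exp 2 := Real.exp_pos 2
    have hE2 : Real.exp 2 = Real.exp 1 * Real.exp 1 := by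
      rw [← Real.exp_add]; norm_num
    have e1 := claimB 1 one_pos
    have e2 := claimB (Real.exp 1) hE0
    have e3 := claimB (Real.exp 2) hE20
    rw [Real.log_one] at e1
    rw [Real.log_exp] at e2
    rw [Real.log_exp] at e3
    rw [hE2] at e3
    set E : ℝ := Real.exp 1
    -- e1 : c * 1 ^ 2 = -g - mu * 0 - mu
    -- e2 : c * E ^ 2 = -g - mu * 1 - mu
    -- e3 : c * (E * E) ^ 2 = -g - mu * 2 - mu
    have key : c * (E ^ 2 - 1) ^ 2 = 0 := by ring_nf; nlinarith [e1, e2, e3]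
    have hEne : (E ^ 2 - 1) ^ 2 ≠ 0 := by
      have h1 : (1 : ℝ) < E ^ 2 := by nlinarith
      exact pow_ne_zero 2 (ne_of_gt (by linarith : (0:ℝ) < E ^ 2 - 1))
    have hc0 : c = 0 := by
      rcases mul_eq_zero.mp key with h | h
      · exact h
      · exact absurd h hEne
    rw [hc0] at e1 e2
    have hmu0 : mu = 0 := by
      rw [zero_mul] at e1 e2
      linarith
    refine ⟨hmu0, ?_⟩
    · have _unused : True := trivial
      have hg0 : g = 0 := by rw [hmu0] at e1; linarith [e1]
      have : Γ (x i0) = G x := by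
        show G (Function.update x i0 (x i0)) = G x
        rw [Function.update_eq_self]
      rw [← this, ← hgdef, hg0]
  -- extract mu = 0
  have hx1 : (fun _ : Fin n => (1 : ℝ)) ∈ D := by
    show (0:ℝ) < 1
    norm_num
  have hmu0 : mu = 0 := (step2 _ hx1).1
  -- Step 3 : pd N F = 0 on D
  have step3 : ∀ x ∈ D, pd N F x = 0 := by
    intro x hx
    have hG0 := (step2 x hx).2
    have hxN : (0 : ℝ) < x N := hx
    rw [hGdef, hmu0] at hG0
    simp only [zero_mul, sub_zero] at hG0
    exact (mul_eq_zero.mp hG0).resolve_left (ne_of_gt hxN)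
  -- Step 4 : pd i F = 0 on D for i < n - 1
  have step4 : ∀ i : Fin n, (i : ℕ) < n - 1 → ∀ x ∈ D, pd i F x = 0 := by
    intro i hi x hx
    have hxN : (0 : ℝ) < x N := hx
    have hNi : N ≠ i := by
      simp only [hNdef, Ne, Fin.ext_iff]
      omega
    have hmem : ∀ t : ℝ, Function.update x i t ∈ D := by
      intro t
      show (0:ℝ) < (Function.update x i t) N
      rwa [Function.update_of_ne hNi]
    have hzero : pd i (pd N F) x = 0 := by
      have : (fun t => pd N F (Function.update x i t)) = fun _ => (0 : ℝ) := by
        funext t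
        exact step3 _ (hmem t)
      rw [pd, this]
      exact deriv_const _ _
    have := H3 i hi x hx
    rw [hzero, zero_add] at this
    have h1x : (1 / x N) ≠ 0 := by positivity
    exact (mul_eq_zero.mp this).resolve_left h1x
  -- Step 5 : fderiv F = 0 on D
  have step5 : ∀ x ∈ D, fderiv ℝ F x = 0 := by
    intro x hx
    have hall : ∀ i : Fin n, pd i F x = 0 := by
      intro i
      by_cases hi : (i : ℕ) < n - 1
      · exact step4 i hi x hx
      · have : i = N := by
          rw [hNdef]
          apply Fin.ext
          have := i.isLt
          simp only []
          omega
        rw [this]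
        exact step3 x hx
    have hbasis : ∀ i : Fin n, fderiv ℝ F x (Pi.single i 1) = 0 := by
      intro i
      rw [← pd_eq_fderiv (hFd x hx)]
      exact hall i
    ext v
    have hv : v = ∑ i : Fin n, Pi.single i (v i) := (Finset.univ_sum_single v).symm
    conv_lhs => rw [hv]
    rw [map_sum, ContinuousLinearMap.zero_apply]
    refine Finset.sum_eq_zero fun i _ => ?_
    have hsingle : Pi.single i (v i) = v i • (Pi.single i 1 : Fin n → ℝ) := by
      rw [← Pi.single_smul, smul_eq_mul, mul_one]
    rw [hsingle, map_smul, hbasis i, smul_zero]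
  -- conclusion
  constructor
  · refine ⟨F (fun _ => 1), ?_⟩
    intro x hx
    exact hDc.is_const_of_fderivWithin_eq_zero (hFD.differentiableOn (by simp))
      (fun y hy => by rw [fderivWithin_of_isOpen hD hy]; exact step5 y hy) hx hx1
  · rw [hmu0] at hmu
    linarith [hmu]
end
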